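/- Let C be a noncanonical system with minimum counterexample w. Then in the lexicographically smallest optimal representation of w in C, the number of coins of value c₁ = 1 used is zero. -/

import Mathlib

open Finset

/-- `x` is a representation of value `v` in the coin system `c 1, …, c n`. -/
def IsRepr (n : ℕ) (c : ℕ → ℕ) (v : ℕ) (x : ℕ → ℕ) : Prop :=
  ∑ i ∈ Finset.Icc 1 n, c i * x i = v

/-- Minimum number of coins over all representations of `v`. -/
noncomputable def opt (n : ℕ) (c : ℕ → ℕ) (v : ℕ) : ℕ :=
  sInf {k | ∃ x : ℕ → ℕ, IsRepr n c v x ∧ ∑ i ∈ Finset.Icc 1 n, x i = k}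

/-- Number of coins used by the greedy algorithm to pay `v`. -/
def grd (n : ℕ) (c : ℕ → ℕ) (v : ℕ) : ℕ :=
  if hv : v = 0 then 0
  else
    let m := ((Finset.Icc 1 n).filter (fun i => c i ≤ v)).sup c
    if hm : 0 < m then grd n c (v - m) + 1 else 0
termination_by v
decreasing_by omega

/-- The system is canonical: greedy is optimal for every positive value. -/
def Canonical (n : ℕ) (c : ℕ → ℕ) : Prop :=
  ∀ v, 0 < v → opt n c v = grd n c v

/-- `w` is a counterexample to the system. -/
def IsCex (n : ℕ) (c : ℕ → ℕ) (w : ℕ) : Prop :=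
  0 < w ∧ opt n c w < grd n c w

/-- `w` is the minimum counterexample to the system. -/
def MinCex (n : ℕ) (c : ℕ → ℕ) (w : ℕ) : Prop :=
  IsCex n c w ∧ ∀ u, IsCex n c u → w ≤ u

/-- A (currency) system: first coin is `1` and coins strictly increase. -/
def IsSystem (n : ℕ) (c : ℕ → ℕ) : Prop :=
  c 1 = 1 ∧ StrictMonoOn c (Set.Icc 1 n)

/-- `x` is an optimal representation of `w` in the system. -/
def OptRepr (n : ℕ) (c : ℕ → ℕ) (w : ℕ) (x : ℕ → ℕ) : Prop :=
  IsRepr n c w x ∧ ∑ i ∈ Finset.Icc 1 n, x i = opt n c w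

/-- `x` is lexicographically smaller than `y` (over indices `1, …, n`). -/
def LexLt (n : ℕ) (x y : ℕ → ℕ) : Prop :=
  ∃ k ∈ Finset.Icc 1 n, x k < y k ∧ ∀ i ∈ Finset.Icc 1 n, i < k → x i = y i

/-!
Removing one coin of value `1` from an optimal representation of `w` leaves a representation
of `w - 1`, so `opt (w - 1) + 1 ≤ opt w`. Since `w - 1` is below the minimum counterexample,
greedy is optimal there, and the greedy count grows by at most one per unit step:
`grd w ≤ grd (w - 1) + 1 = opt (w - 1) + 1 ≤ opt w`, contradicting `opt w < grd w`.
-/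

section CoinSystem

variable {n : ℕ} {c : ℕ → ℕ}

lemma opt_sub_add_one_le {v i : ℕ} {x : ℕ → ℕ} (hx : IsRepr n c v x) (hi : i ∈ Icc 1 n)
    (hxi : 0 < x i) : opt n c (v - c i) + 1 ≤ ∑ j ∈ Icc 1 n, x j := by
  set y := x - Pi.single i 1
  have hxy : x = y + Pi.single i 1 := by
    ext j
    rcases eq_or_ne j i with rfl | hj
    · simp only [y, Pi.add_apply, Pi.sub_apply, Pi.single_eq_same]
      omega
    · simp [y, hj]
  have hy : IsRepr n c (v - c i) y := by
    unfold IsRepr at hx ⊢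
    rw [hxy] at hx
    simp only [Pi.add_apply, mul_add, sum_add_distrib, Pi.single_apply, mul_ite, mul_one,
      mul_zero, sum_ite_eq', hi, if_true] at hx
    omega
  calc opt n c (v - c i) + 1 ≤ ∑ j ∈ Icc 1 n, y j + 1 := by
        gcongr
        exact Nat.sInf_le ⟨y, hy, rfl⟩
    _ = ∑ j ∈ Icc 1 n, x j := by
        rw [hxy]
        simp only [Pi.add_apply, sum_add_distrib, Pi.single_apply, sum_ite_eq', hi, if_true]

lemma grd_zero : grd n c 0 = 0 := by
  rw [grd]
  simp

lemma grd_le_opt_of_lt_minCex {w u : ℕ} (hw : MinCex n c w) (hu : u < w) :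
    grd n c u ≤ opt n c u := by
  by_contra! h
  rcases Nat.eq_zero_or_pos u with rfl | hu0
  · simp [grd_zero] at h
  · exact absurd (hw.2 u ⟨hu0, h⟩) (by omega)

/-- The coin paid first by the greedy algorithm on `v` (`0` if no coin fits). -/
def greedyCoin (n : ℕ) (c : ℕ → ℕ) (v : ℕ) : ℕ :=
  ((Icc 1 n).filter (fun i => c i ≤ v)).sup c

lemma greedyCoin_le (v : ℕ) : greedyCoin n c v ≤ v :=
  Finset.sup_le fun _ hi => (mem_filter.mp hi).2

lemma greedyCoin_pos (hn : 0 < n) (h1 : c 1 = 1) {v : ℕ} (hv : 0 < v) :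
    0 < greedyCoin n c v := by
  have h1mem : 1 ∈ (Icc 1 n).filter (fun i => c i ≤ v) := by
    simp only [mem_filter, mem_Icc, h1]
    omega
  have : c 1 ≤ greedyCoin n c v := le_sup h1mem
  omega

lemma greedyCoin_sub_one {v : ℕ} (h : greedyCoin n c v < v) :
    greedyCoin n c (v - 1) = greedyCoin n c v := by
  have hfilter : (Icc 1 n).filter (fun i => c i ≤ v - 1) = (Icc 1 n).filter (fun i => c i ≤ v) :=
    filter_congr fun i hi => by
      have : c i ≤ v → c i ≤ greedyCoin n c v := fun hci => le_sup (mem_filter.mpr ⟨hi, hci⟩)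
      constructor <;> omega
  rw [greedyCoin, hfilter, greedyCoin]

lemma grd_eq_of_greedyCoin_pos {v : ℕ} (h : 0 < greedyCoin n c v) :
    grd n c v = grd n c (v - greedyCoin n c v) + 1 := by
  have hv : v ≠ 0 := by have := greedyCoin_le (n := n) (c := c) v; omega
  rw [grd, dif_neg hv]
  exact dif_pos h

lemma grd_le_grd_sub_one_add_one (hn : 0 < n) (h1 : c 1 = 1) (v : ℕ) :
    grd n c v ≤ grd n c (v - 1) + 1 := by
  induction v using Nat.strong_induction_on with
  | _ v ih =>
    rcases Nat.eq_zero_or_pos v with rfl | hv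
    · simp [grd_zero]
    have hm := greedyCoin_pos hn h1 hv
    rw [grd_eq_of_greedyCoin_pos hm]
    rcases (greedyCoin_le (n := n) (c := c) v).eq_or_lt with heq | hlt
    · rw [heq, Nat.sub_self, grd_zero]
      omega
    · have hm' : 0 < greedyCoin n c (v - 1) := greedyCoin_sub_one hlt ▸ hm
      rw [grd_eq_of_greedyCoin_pos hm', greedyCoin_sub_one hlt, Nat.sub_right_comm]
      have := ih (v - greedyCoin n c v) (by omega)
      omega

end CoinSystem

theorem no_unit_coin_in_lex_min_opt_general (n : ℕ) (c : ℕ → ℕ) (hn : 0 < n)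
    (hsys : IsSystem n c) (w : ℕ) (hw : MinCex n c w)
    (x : ℕ → ℕ) (hx : OptRepr n c w x) :
    x 1 = 0 := by
  by_contra hx1
  have hw0 : 0 < w := hw.1.1
  have hremove : opt n c (w - 1) + 1 ≤ opt n c w := by
    simpa only [hsys.1, hx.2] using
      opt_sub_add_one_le hx.1 (mem_Icc.mpr ⟨le_rfl, hn⟩) (Nat.pos_of_ne_zero hx1)
  exact (calc grd n c w ≤ grd n c (w - 1) + 1 := grd_le_grd_sub_one_add_one hn hsys.1 w
    _ ≤ opt n c (w - 1) + 1 := by gcongr; exact grd_le_opt_of_lt_minCex hw (by omega)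
    _ ≤ opt n c w := hremove
    _ < grd n c w := hw.1.2).false

/-- In the lexicographically smallest optimal representation of the minimum
counterexample, no coin of value `1` is used. -/
theorem no_unit_coin_in_lex_min_opt (n : ℕ) (c : ℕ → ℕ) (hn : 0 < n)
    (hsys : IsSystem n c) (hnc : ¬ Canonical n c) (w : ℕ) (hw : MinCex n c w)
    (x : ℕ → ℕ) (hx : OptRepr n c w x)
    (hlex : ∀ y : ℕ → ℕ, OptRepr n c w y → ¬ LexLt n y x) :
    x 1 = 0 :=
  no_unit_coin_in_lex_min_opt_general n c hn hsys w hw x hx
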